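/- Let 𝕋 denote the circle group (the unit complex numbers, Mathlib's Circle), let N be the subgroup of Π_{i∈I} 𝕋 consisting of the families equal to 1 for all but finitely many i ∈ I, and let Ω^ut_{I;ℂ} := (Π_{i∈I} 𝕋)/N. Let ℂ^{⊗I}_ut denote the ℂ-linear span in ⨂_{i∈I} ℂ of {⊗α : α ∈ Π_{i∈I} 𝕋} (this span is a unital ℂ-subalgebra). Then there exists an injective ℂ-algebra homomorphism Φ from the group algebra MonoidAlgebra ℂ Ω^ut_{I;ℂ} into ⨂_{i∈I} ℂ whose range is exactly ℂ^{⊗I}_ut and such that for every α ∈ Π_{i∈I} 𝕋, Φ(single [α] 1) is a scalar multiple of ⊗α by a complex number of modulus 1. In particular, ℂ^{⊗I}_ut is isomorphic as a ℂ-algebra to MonoidAlgebra ℂ Ω^ut_{I;ℂ}. -/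

import Mathlib

open scoped TensorProduct

/-- The subgroup `N` of `Π_{i∈I} 𝕋` consisting of the families that equal `1` at all but
finitely many coordinates. -/
noncomputable def circleFinSupport (I : Type*) : Subgroup (∀ _ : I, Circle) where
  carrier := {α | {i | α i ≠ 1}.Finite}
  one_mem' := by simp
  mul_mem' := by
    intro a b ha hb
    refine (ha.union hb).subset fun i hi => ?_
    by_cases h1 : a i = 1
    · exact Or.inr fun e => hi (by rw [Pi.mul_apply, h1, e, one_mul])
    · exact Or.inl h1
  inv_mem' := by
    intro a ha
    exact ha.subset fun i hi => fun e => hi (by rw [Pi.inv_apply, e, inv_one])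

/-- The span `ℂ^{⊗I}_ut` of the elementary tensors of families of unit complex numbers
inside `⨂_{i∈I} ℂ`. -/
noncomputable def unitaryTensorSpan (I : Type*) : Submodule ℂ (⨂[ℂ] _ : I, ℂ) :=
  Submodule.span ℂ {t | ∃ α : ∀ _ : I, Circle,
    t = PiTensorProduct.tprod ℂ (fun i => (α i : ℂ))}

/-!
The product of the entries is a character of the finite-support subgroup `N`; since `𝕋` is
divisible, it extends to a character `χ` of `Π_{i∈I} 𝕋`. As `⊗a = χ(a) • 1` for `a ∈ N`, the map
`α ↦ χ(α)⁻¹ • ⊗α` is a homomorphism into `⨂_{i∈I} ℂ` that is trivial on `N`, so it descends to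
`Ω` and lifts to the group algebra; its image spans `ℂ^{⊗I}_ut`. For injectivity, the
multilinear functional `f ↦ ∏ f_i` (zero unless almost all `f_i = 1`) takes the value `1` at the
identity of `Ω` and `0` elsewhere, so after translating by group elements it reads off every
coefficient.
-/

open Function PiTensorProduct

namespace MonoidAlgebra

variable {k A : Type*} [CommSemiring k] [Semiring A] [Algebra k A]

theorem range_lift {M : Type*} [Monoid M] (f : M →* A) :
    Set.range (lift k A M f) = Submodule.span k (Set.range f) := by
  have h : ⇑(lift k A M f) = Finsupp.linearCombination k f ∘ coeff :=
    funext fun x => by rw [lift_apply, comp_apply, Finsupp.linearCombination_apply]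
  rw [h, Set.range_comp, Set.range_eq_univ.mpr fun v => ⟨ofCoeff v, rfl⟩, Set.image_univ,
    ← LinearMap.coe_range, Finsupp.range_linearCombination]

variable {G : Type*} [Group G] {f : G →* A} {τ : A →ₗ[k] k}

theorem apply_lift_eq_coeff_one (hτ₁ : τ 1 = 1) (hτ : ∀ g ≠ 1, τ (f g) = 0) (x : k[G]) :
    τ (lift k A G f x) = x.coeff 1 := by
  rw [lift_apply, map_finsuppSum]
  refine (Finsupp.sum_eq_single 1 (fun g _ hg => by rw [map_smul, hτ g hg, smul_zero])
    (fun _ => by rw [zero_smul, map_zero])).trans ?_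
  rw [map_smul, f.map_one, hτ₁, smul_eq_mul, mul_one]

theorem lift_injective_of_apply_eq_zero (hτ₁ : τ 1 = 1) (hτ : ∀ g ≠ 1, τ (f g) = 0) :
    Injective (lift k A G f) := by
  intro x y hxy
  have coeff_eq (z : k[G]) (g : G) : z.coeff g = τ (lift k A G f z * f g⁻¹) := by
    have : f g⁻¹ = lift k A G f (single g⁻¹ 1) := by rw [lift_single, one_smul]
    rw [this, ← map_mul, apply_lift_eq_coeff_one hτ₁ hτ, coeff_mul_single_apply, one_mul, inv_inv,
      mul_one]
  exact coeff_injective (Finsupp.ext fun g => by rw [coeff_eq, hxy, ← coeff_eq])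

end MonoidAlgebra

theorem Circle.baer : Module.Baer ℤ (Additive Circle) :=
  letI : DivisibleBy (Additive Circle) ℤ :=
    Surjective.divisibleBy (f := expHom) exp_surjective fun x n => map_zsmul expHom n x
  Module.Baer.of_divisible _

theorem Circle.exists_monoidHom_extension {G : Type*} [CommGroup G] (H : Subgroup G)
    (χ : H →* Circle) : ∃ χ' : G →* Circle, ∀ h : H, χ' h = χ h := by
  obtain ⟨χ', hχ'⟩ := Circle.baer.extension_property_addMonoidHom
    (MonoidHom.toAdditive H.subtype) H.subtype_injective (MonoidHom.toAdditive χ)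
  exact ⟨MonoidHom.toAdditive.symm χ', fun h => DFunLike.congr_fun hχ' h⟩

theorem Function.hasFiniteMulSupport_update_iff {ι M : Type*} [One M] [DecidableEq ι]
    (f : ι → M) (i : ι) (z : M) :
    (update f i z).HasFiniteMulSupport ↔ f.HasFiniteMulSupport := by
  classical
  simp only [HasFiniteMulSupport, mulSupport_update_eq_ite]
  split_ifs
  · exact ⟨fun h => (h.insert i).subset (Set.subset_insert_sdiff_singleton i _), fun h => h.sdiff⟩
  · exact Set.finite_insert

section finprodOrZero

variable {ι R : Type*} [CommSemiring R]

open scoped Classical in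
noncomputable def finprodOrZero (f : ι → R) : R :=
  if f.HasFiniteMulSupport then ∏ᶠ i, f i else 0

open scoped Classical in
theorem finprodOrZero_update [DecidableEq ι] (f : ι → R) (i : ι) (z : R) :
    finprodOrZero (update f i z) =
      z * if f.HasFiniteMulSupport then ∏ᶠ (j) (_ : j ≠ i), f j else 0 := by
  unfold finprodOrZero
  rw [hasFiniteMulSupport_update_iff]
  split_ifs with hf
  · rw [← mul_finprod_cond_ne i ((hasFiniteMulSupport_update_iff f i z).mpr hf), update_self]
    congr 1
    exact finprod_congr fun j => finprod_congr fun hj => update_of_ne hj z f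
  · rw [mul_zero]

theorem finprodOrZero_eq_zero {f : ι → R} (hf : ¬ f.HasFiniteMulSupport) : finprodOrZero f = 0 :=
  if_neg hf

theorem finprodOrZero_one : finprodOrZero (1 : ι → R) = 1 :=
  (if_pos hasFiniteMulSupport_fun_one).trans finprod_one

variable (ι R) in
noncomputable def MultilinearMap.finprodOrZero : MultilinearMap R (fun _ : ι => R) R where
  toFun := _root_.finprodOrZero
  map_update_add' f i x y := by simp only [finprodOrZero_update, add_mul]
  map_update_smul' f i c x := by simp only [finprodOrZero_update, smul_eq_mul, mul_assoc]

theorem MultilinearMap.finprodOrZero_apply (f : ι → R) :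
    MultilinearMap.finprodOrZero ι R f = _root_.finprodOrZero f := rfl

end finprodOrZero

theorem PiTensorProduct.tprod_eq_finprod_smul_one {ι R : Type*} [CommSemiring R] (f : ι → R)
    (hf : f.HasFiniteMulSupport) : tprod R f = (∏ᶠ i, f i) • 1 := by
  classical
  set s := Set.Finite.toFinset (s := mulSupport f) hf
  have hpiece : s.piecewise (fun i => f i • (1 : R)) 1 = f := by
    ext i
    by_cases hi : i ∈ s
    · rw [Finset.piecewise_eq_of_mem _ _ _ hi, smul_eq_mul, mul_one]
    · rw [Finset.piecewise_eq_of_notMem _ _ _ hi, Pi.one_apply, eq_comm]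
      by_contra h
      exact hi ((Set.Finite.mem_toFinset _).mpr h)
  nth_rw 1 [← hpiece]
  rw [finprod_eq_prod f hf]
  exact (tprod R).map_piecewise_smul f 1 s

theorem PiTensorProduct.lift_finprodOrZero_one {ι R : Type*} [CommSemiring R] :
    lift (MultilinearMap.finprodOrZero ι R) 1 = 1 := by
  rw [one_def, lift.tprod, MultilinearMap.finprodOrZero_apply, finprodOrZero_one]

section UnitaryTensor

variable {I : Type*}

theorem hasFiniteMulSupport_coe_iff (α : I → Circle) :
    HasFiniteMulSupport (fun i => (α i : ℂ)) ↔ α ∈ circleFinSupport I := by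
  simp only [HasFiniteMulSupport, mulSupport, ne_eq, Circle.coe_eq_one]
  rfl

theorem tprod_mem_unitaryTensorSpan (α : I → Circle) :
    tprod ℂ (fun i => (α i : ℂ)) ∈ unitaryTensorSpan I :=
  Submodule.subset_span ⟨α, rfl⟩

variable (I) in
noncomputable def circleFinSupportProd : circleFinSupport I →* Circle where
  toFun a := ∏ᶠ i, (a : I → Circle) i
  map_one' := finprod_one
  map_mul' a b := finprod_mul_distrib a.2 b.2

theorem coe_circleFinSupportProd (a : circleFinSupport I) :
    (circleFinSupportProd I a : ℂ) = ∏ᶠ i, ((a : I → Circle) i : ℂ) :=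
  Circle.coeHom.map_finprod a.2

noncomputable def normalizedTprod (χ : (I → Circle) →* Circle) :
    (I → Circle) →* ⨂[ℂ] _ : I, ℂ where
  toFun α := (((χ α)⁻¹ : Circle) : ℂ) • tprod ℂ (fun i => (α i : ℂ))
  map_one' := by rw [map_one, inv_one, Circle.coe_one, one_smul]; rfl
  map_mul' α β := by
    rw [smul_tprod_mul_smul_tprod, map_mul, mul_inv, Circle.coe_mul]
    rfl

variable {χ : (I → Circle) →* Circle}

theorem normalizedTprod_apply (α : I → Circle) :
    normalizedTprod χ α = (((χ α)⁻¹ : Circle) : ℂ) • tprod ℂ (fun i => (α i : ℂ)) := rfl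

theorem normalizedTprod_eq_one (hχ : ∀ a : circleFinSupport I, χ a = circleFinSupportProd I a)
    {a : I → Circle} (ha : a ∈ circleFinSupport I) : normalizedTprod χ a = 1 := by
  rw [normalizedTprod_apply, tprod_eq_finprod_smul_one _ ((hasFiniteMulSupport_coe_iff a).mpr ha),
    ← coe_circleFinSupportProd ⟨a, ha⟩, ← hχ, smul_smul, ← Circle.coe_mul, inv_mul_cancel,
    Circle.coe_one, one_smul]

theorem lift_finprodOrZero_normalizedTprod {a : I → Circle} (ha : a ∉ circleFinSupport I) :
    lift (MultilinearMap.finprodOrZero I ℂ) (normalizedTprod χ a) = 0 := by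
  rw [normalizedTprod_apply, map_smul, lift.tprod, MultilinearMap.finprodOrZero_apply,
    finprodOrZero_eq_zero (mt (hasFiniteMulSupport_coe_iff a).mp ha), smul_zero]

variable (hχ : ∀ a : circleFinSupport I, χ a = circleFinSupportProd I a)

noncomputable def omegaTprod : (I → Circle) ⧸ circleFinSupport I →* ⨂[ℂ] _ : I, ℂ :=
  QuotientGroup.lift _ (normalizedTprod χ) fun _ ha => normalizedTprod_eq_one hχ ha

theorem omegaTprod_mk (α : I → Circle) : omegaTprod hχ α = normalizedTprod χ α := rfl

theorem lift_finprodOrZero_omegaTprod {ω : (I → Circle) ⧸ circleFinSupport I} (hω : ω ≠ 1) :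
    lift (MultilinearMap.finprodOrZero I ℂ) (omegaTprod hχ ω) = 0 := by
  induction ω using QuotientGroup.induction_on with | H α => ?_
  exact lift_finprodOrZero_normalizedTprod (mt (QuotientGroup.eq_one_iff α).mpr hω)

theorem span_range_omegaTprod :
    Submodule.span ℂ (Set.range (omegaTprod hχ)) = unitaryTensorSpan I := by
  rw [← QuotientGroup.mk_surjective.range_comp]
  refine le_antisymm (Submodule.span_le.mpr ?_) (Submodule.span_le.mpr ?_)
  · rintro _ ⟨α, rfl⟩
    exact Submodule.smul_mem _ _ (tprod_mem_unitaryTensorSpan α)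
  · rintro _ ⟨α, rfl⟩
    have : tprod ℂ (fun i => (α i : ℂ)) = (χ α : ℂ) • normalizedTprod χ α := by
      rw [normalizedTprod_apply, smul_smul, ← Circle.coe_mul, mul_inv_cancel, Circle.coe_one,
        one_smul]
    rw [this]
    exact Submodule.smul_mem _ _ (Submodule.subset_span ⟨α, rfl⟩)

end UnitaryTensor

theorem monoidAlgebra_omega_iso_unitaryTensorSpan_general (I : Type*) :
    ∃ Φ : MonoidAlgebra ℂ ((∀ _ : I, Circle) ⧸ circleFinSupport I) →ₐ[ℂ] ⨂[ℂ] _ : I, ℂ,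
      Function.Injective Φ ∧
      Set.range Φ = (unitaryTensorSpan I : Set (⨂[ℂ] _ : I, ℂ)) ∧
      ∀ α : ∀ _ : I, Circle, ∃ c : ℂ, ‖c‖ = 1 ∧
        Φ (MonoidAlgebra.single (QuotientGroup.mk α) 1) =
          c • PiTensorProduct.tprod ℂ (fun i => (α i : ℂ)) := by
  obtain ⟨χ, hχ⟩ := Circle.exists_monoidHom_extension _ (circleFinSupportProd I)
  refine ⟨MonoidAlgebra.lift ℂ _ _ (omegaTprod hχ), ?_, ?_,
    fun α => ⟨_, Circle.norm_coe (χ α)⁻¹, ?_⟩⟩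
  · exact MonoidAlgebra.lift_injective_of_apply_eq_zero lift_finprodOrZero_one
      fun _ => lift_finprodOrZero_omegaTprod hχ
  · rw [MonoidAlgebra.range_lift, span_range_omegaTprod]
  · rw [MonoidAlgebra.lift_single, one_smul, omegaTprod_mk, normalizedTprod_apply]

/-- There is an injective algebra homomorphism from the group algebra of
`Ω^ut_{I;ℂ} = (Π_{i∈I} 𝕋)/N` into `⨂_{i∈I} ℂ` whose range is exactly `ℂ^{⊗I}_ut` and which
sends each class `[α]` to a unimodular scalar multiple of `⊗α`. -/
theorem monoidAlgebra_omega_iso_unitaryTensorSpan (I : Type*) [Infinite I] :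
    ∃ Φ : MonoidAlgebra ℂ ((∀ _ : I, Circle) ⧸ circleFinSupport I) →ₐ[ℂ] ⨂[ℂ] _ : I, ℂ,
      Function.Injective Φ ∧
      Set.range Φ = (unitaryTensorSpan I : Set (⨂[ℂ] _ : I, ℂ)) ∧
      ∀ α : ∀ _ : I, Circle, ∃ c : ℂ, ‖c‖ = 1 ∧
        Φ (MonoidAlgebra.single (QuotientGroup.mk α) 1) =
          c • PiTensorProduct.tprod ℂ (fun i => (α i : ℂ)) :=
  monoidAlgebra_omega_iso_unitaryTensorSpan_general I
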